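/- For Gaussian mechanism calibration: if a real-valued query has sensitivity Δ and we release it plus N(0, σ²) noise with σ ≥ Δ·√(2 log(1.25/δ))/ε (with ε ∈ (0,1), δ ∈ (0,1)), then for any two adjacent values a, b with |a−b| ≤ Δ, the privacy loss event has probability bound: P[ |log(φ_{a,σ}(Z)/φ_{b,σ}(Z))| > ε ] ≤ δ where Z ~ N(a, σ²) and φ_{c,σ} is the N(c,σ²) density. -/

import Mathlib

open ProbabilityTheory

/-! With `u = (a - b) / σ`, the privacy loss at `z` is `u * ((z - a) / σ + u / 2)`, so for the
standardised `Y = (Z - a) / σ ~ N(0, 1)` the event is `|Y + u / 2| > k` with `k = ε / |u|`, and the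
calibration of `σ` together with `|a - b| ≤ Δ` gives `k ≥ √(2 log (1.25 / δ))`, i.e.
`1.25 * exp (-k ^ 2 / 2) ≤ δ`.
Writing `s = |u| / 2`, so that `k * s = ε / 2 ≤ 1 / 2`, the event has probability at most
`P(Y > k - s) + P(Y > k + s)`. A tail beyond `t ≥ 0` is at most `exp (-t ^ 2 / 2) / 2`, by
comparing the density with the one shifted by `t`. If `s ≤ k` the two tail bounds add up to
`exp (-(k ^ 2 + s ^ 2) / 2) * cosh (k * s) ≤ 1.25 * exp (-k ^ 2 / 2)`. If `s > k` then
`k ^ 2 < 1 / 2`, which forces `δ > 0.9`, and the near tail is at most `1 / 2 + (s - k) / √(2π)`. -/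

open MeasureTheory Real Set
open scoped NNReal ENNReal

lemma cosh_le_five_fourths {x : ℝ} (hx : |x| ≤ 1 / 2) : cosh x ≤ 5 / 4 := by
  have hsq : x ^ 2 / 2 ≤ 1 / 8 := by nlinarith [sq_abs x, abs_nonneg x]
  calc cosh x ≤ exp (x ^ 2 / 2) := cosh_le_exp_half_sq x
    _ ≤ exp (1 / 8) := exp_le_exp.mpr hsq
    _ ≤ 1 / (1 - 1 / 8) := exp_bound_div_one_sub_of_interval (by norm_num) (by norm_num)
    _ ≤ 5 / 4 := by norm_num

lemma five_fourths_mul_exp_neg_sq_half_le {δ k : ℝ} (hδ : 0 < δ)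
    (hk : √(2 * log (1.25 / δ)) ≤ k) : 1.25 * exp (-k ^ 2 / 2) ≤ δ := by
  have hsq : 2 * log (1.25 / δ) ≤ k ^ 2 := by
    have hsqrt := Real.sq_sqrt' (x := 2 * log (1.25 / δ))
    nlinarith [pow_le_pow_left₀ (sqrt_nonneg _) hk 2, le_max_left (2 * log (1.25 / δ)) 0]
  calc 1.25 * exp (-k ^ 2 / 2) ≤ 1.25 * exp (-log (1.25 / δ)) := by gcongr; linarith
    _ = δ := by rw [exp_neg, exp_log (by positivity)]; field_simp

lemma log_div_gaussian_density {σ : ℝ} (hσ : σ ≠ 0) (a b z : ℝ) :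
    log (1 / (σ * √(2 * π)) * exp (-(z - a) ^ 2 / (2 * σ ^ 2)) /
        (1 / (σ * √(2 * π)) * exp (-(z - b) ^ 2 / (2 * σ ^ 2)))) =
      (a - b) / σ * ((z - a) / σ + (a - b) / σ / 2) := by
  have hpos : 0 < √(2 * π) := by positivity
  rw [mul_div_mul_left _ _ (one_div_ne_zero (mul_ne_zero hσ hpos.ne')), ← exp_sub, log_exp]
  field_simp
  ring

namespace ProbabilityTheory

variable {μ : ℝ} {v : ℝ≥0}

lemma gaussianReal_Ioi_self_le_half (μ : ℝ) (v : ℝ≥0) : gaussianReal μ v (Ioi μ) ≤ 1 / 2 := by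
  have hsymm : gaussianReal μ v (Ioi μ) = gaussianReal μ v (Iio μ) := by
    have hmap := gaussianReal_map_const_sub (μ := μ) (v := v) (2 * μ)
    rw [show 2 * μ - μ = μ by ring] at hmap
    conv_lhs => rw [← hmap]
    rw [Measure.map_apply (by fun_prop) measurableSet_Ioi]
    congr 1
    ext z
    simp only [mem_preimage, mem_Ioi, mem_Iio]
    constructor <;> intro h <;> linarith
  have htotal : gaussianReal μ v (Ioi μ) + gaussianReal μ v (Iio μ) ≤ 1 := by
    rw [← measure_union Ioi_disjoint_Iio_same measurableSet_Iio]
    exact prob_le_one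
  rw [ENNReal.le_div_iff_mul_le (by simp) (by simp), mul_two]
  rwa [← hsymm] at htotal

lemma gaussianPDFReal_le_exp_mul_gaussianPDFReal_add {t x : ℝ} (ht : 0 ≤ t) (hx : μ + t ≤ x) :
    gaussianPDFReal μ v x ≤ exp (-t ^ 2 / (2 * v)) * gaussianPDFReal (μ + t) v x := by
  rw [gaussianPDFReal, gaussianPDFReal, mul_left_comm, ← exp_add]
  gcongr
  rw [← add_div]
  gcongr
  nlinarith

lemma gaussianPDFReal_le_inv_sqrt (μ : ℝ) (v : ℝ≥0) (x : ℝ) :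
    gaussianPDFReal μ v x ≤ (√(2 * π * v))⁻¹ := by
  rw [gaussianPDFReal]
  refine mul_le_of_le_one_right (by positivity) (exp_le_one_iff.mpr ?_)
  exact div_nonpos_of_nonpos_of_nonneg (neg_nonpos.mpr (sq_nonneg _)) (by positivity)

lemma gaussianReal_Ioi_add_le (hv : v ≠ 0) {t : ℝ} (ht : 0 ≤ t) :
    gaussianReal μ v (Ioi (μ + t)) ≤ ENNReal.ofReal (exp (-t ^ 2 / (2 * v)) / 2) := by
  calc gaussianReal μ v (Ioi (μ + t))
      ≤ ∫⁻ x in Ioi (μ + t), ENNReal.ofReal (exp (-t ^ 2 / (2 * v))) * gaussianPDF (μ + t) v x := by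
        rw [gaussianReal_apply _ hv]
        refine setLIntegral_mono (by fun_prop) fun x hx => ?_
        rw [gaussianPDF, gaussianPDF, ← ENNReal.ofReal_mul (exp_pos _).le]
        exact ENNReal.ofReal_le_ofReal
          (gaussianPDFReal_le_exp_mul_gaussianPDFReal_add ht (le_of_lt hx))
    _ = ENNReal.ofReal (exp (-t ^ 2 / (2 * v))) * gaussianReal (μ + t) v (Ioi (μ + t)) := by
        rw [lintegral_const_mul _ (measurable_gaussianPDF _ _), gaussianReal_apply _ hv]
    _ ≤ ENNReal.ofReal (exp (-t ^ 2 / (2 * v))) * (1 / 2) := by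
        gcongr
        exact gaussianReal_Ioi_self_le_half _ _
    _ = ENNReal.ofReal (exp (-t ^ 2 / (2 * v)) / 2) := by
        rw [ENNReal.ofReal_div_of_pos two_pos, ENNReal.ofReal_ofNat, mul_one_div]

lemma gaussianReal_Ioi_sub_le (hv : v ≠ 0) {t : ℝ} (ht : 0 ≤ t) :
    gaussianReal μ v (Ioi (μ - t)) ≤ ENNReal.ofReal (1 / 2 + t / √(2 * π * v)) := by
  have hcenter : gaussianReal μ v (Ioc (μ - t) μ) ≤ ENNReal.ofReal (t / √(2 * π * v)) :=
    calc gaussianReal μ v (Ioc (μ - t) μ)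
        ≤ ∫⁻ _ in Ioc (μ - t) μ, ENNReal.ofReal (√(2 * π * v))⁻¹ := by
          rw [gaussianReal_apply _ hv]
          exact setLIntegral_mono measurable_const fun x _ =>
            ENNReal.ofReal_le_ofReal (gaussianPDFReal_le_inv_sqrt μ v x)
      _ = ENNReal.ofReal (t / √(2 * π * v)) := by
          rw [setLIntegral_const, Real.volume_Ioc, sub_sub_cancel,
            ← ENNReal.ofReal_mul (by positivity), div_eq_inv_mul]
  calc gaussianReal μ v (Ioi (μ - t))
      ≤ gaussianReal μ v (Ioc (μ - t) μ) + gaussianReal μ v (Ioi μ) := by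
        rw [← Ioc_union_Ioi_eq_Ioi (by linarith : μ - t ≤ μ)]
        exact measure_union_le _ _
    _ ≤ ENNReal.ofReal (t / √(2 * π * v)) + ENNReal.ofReal (1 / 2) := by
        rw [ENNReal.ofReal_div_of_pos two_pos, ENNReal.ofReal_one, ENNReal.ofReal_ofNat]
        exact add_le_add hcenter (gaussianReal_Ioi_self_le_half μ v)
    _ = ENNReal.ofReal (1 / 2 + t / √(2 * π * v)) := by
        rw [← ENNReal.ofReal_add (by positivity) (by norm_num), add_comm]

lemma gaussianReal_Iio_neg (v : ℝ≥0) (t : ℝ) :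
    gaussianReal 0 v (Iio (-t)) = gaussianReal 0 v (Ioi t) := by
  have hmap := gaussianReal_map_neg (μ := 0) (v := v)
  rw [neg_zero] at hmap
  conv_lhs => rw [← hmap]
  rw [Measure.map_apply measurable_neg measurableSet_Iio]
  congr 1
  ext y
  simp

lemma gaussianReal_abs_add_gt_le (v : ℝ≥0) (k r : ℝ) :
    gaussianReal 0 v {y | k < |y + r|} ≤
      gaussianReal 0 v (Ioi (k - |r|)) + gaussianReal 0 v (Ioi (k + |r|)) := by
  have hsplit : {y | k < |y + r|} = Ioi (k - r) ∪ Iio (-(k + r)) := by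
    ext y
    simp only [mem_ofPred_eq, lt_abs, mem_union, mem_Ioi, mem_Iio]
    constructor <;> rintro (h | h) <;> [left; right; left; right] <;> linarith
  calc gaussianReal 0 v {y | k < |y + r|}
      ≤ gaussianReal 0 v (Ioi (k - r)) + gaussianReal 0 v (Ioi (k + r)) := by
        rw [hsplit, ← gaussianReal_Iio_neg v (k + r)]
        exact measure_union_le (μ := gaussianReal 0 v) _ _
    _ = gaussianReal 0 v (Ioi (k - |r|)) + gaussianReal 0 v (Ioi (k + |r|)) := by
        rcases abs_cases r with ⟨hr, -⟩ | ⟨hr, -⟩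
        · rw [hr]
        · rw [hr, sub_neg_eq_add, ← sub_eq_add_neg, add_comm]

lemma gaussianReal_Ioi_sub_add_Ioi_add_le_of_le {k s : ℝ} (hs : 0 ≤ s) (hsk : s ≤ k) :
    gaussianReal 0 1 (Ioi (k - s)) + gaussianReal 0 1 (Ioi (k + s)) ≤
      ENNReal.ofReal (exp (-(k ^ 2 + s ^ 2) / 2) * cosh (k * s)) := by
  have hnear := gaussianReal_Ioi_add_le (μ := 0) one_ne_zero (sub_nonneg.mpr hsk)
  have hfar := gaussianReal_Ioi_add_le (μ := 0) one_ne_zero (add_nonneg (hs.trans hsk) hs)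
  simp only [zero_add, NNReal.coe_one, mul_one] at hnear hfar
  calc gaussianReal 0 1 (Ioi (k - s)) + gaussianReal 0 1 (Ioi (k + s))
      ≤ ENNReal.ofReal (exp (-(k - s) ^ 2 / 2) / 2) + ENNReal.ofReal (exp (-(k + s) ^ 2 / 2) / 2) :=
        add_le_add hnear hfar
    _ = ENNReal.ofReal (exp (-(k ^ 2 + s ^ 2) / 2) * cosh (k * s)) := by
        rw [← ENNReal.ofReal_add (by positivity) (by positivity), cosh_eq, mul_div_assoc',
          mul_add, ← exp_add, ← exp_add]
        congr 2
        ring_nf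

lemma gaussianReal_Ioi_sub_add_Ioi_add_le_of_lt {k s : ℝ} (hk : 0 ≤ k) (hks : k < s) :
    gaussianReal 0 1 (Ioi (k - s)) + gaussianReal 0 1 (Ioi (k + s)) ≤
      ENNReal.ofReal (1 / 2 + (s - k) / √(2 * π) + exp (-k ^ 2 / 2) / 2) := by
  have hnear := gaussianReal_Ioi_sub_le (μ := 0) one_ne_zero (sub_nonneg.mpr hks.le)
  have hfar := gaussianReal_Ioi_add_le (μ := 0) one_ne_zero (add_nonneg hk (hk.trans hks.le))
  simp only [zero_sub, neg_sub, zero_add, NNReal.coe_one, mul_one] at hnear hfar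
  have hexp : exp (-(k + s) ^ 2 / 2) ≤ exp (-k ^ 2 / 2) := by
    gcongr
    nlinarith
  calc gaussianReal 0 1 (Ioi (k - s)) + gaussianReal 0 1 (Ioi (k + s))
      ≤ ENNReal.ofReal (1 / 2 + (s - k) / √(2 * π)) + ENNReal.ofReal (exp (-k ^ 2 / 2) / 2) :=
        add_le_add hnear (hfar.trans (ENNReal.ofReal_le_ofReal (by linarith)))
    _ = _ := by rw [← ENNReal.ofReal_add (by positivity) (by positivity)]

lemma gaussianReal_Ioi_sub_add_Ioi_add_le_of_mul_le_half {k s δ : ℝ} (hk : 0 ≤ k) (hs : 0 ≤ s)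
    (hks : k * s ≤ 1 / 2) (hδ : δ < 1) (hkδ : 1.25 * exp (-k ^ 2 / 2) ≤ δ) :
    gaussianReal 0 1 (Ioi (k - s)) + gaussianReal 0 1 (Ioi (k + s)) ≤ ENNReal.ofReal δ := by
  rcases le_or_gt s k with hsk | hks'
  · refine (gaussianReal_Ioi_sub_add_Ioi_add_le_of_le hs hsk).trans (ENNReal.ofReal_le_ofReal ?_)
    have hcosh := cosh_le_five_fourths (x := k * s) (by rwa [abs_of_nonneg (by positivity)])
    calc exp (-(k ^ 2 + s ^ 2) / 2) * cosh (k * s) ≤ exp (-k ^ 2 / 2) * (5 / 4) := by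
          gcongr
          nlinarith
      _ ≤ δ := by linarith
  · refine (gaussianReal_Ioi_sub_add_Ioi_add_le_of_lt hk hks').trans (ENNReal.ofReal_le_ofReal ?_)
    have hk2 : 2 / 5 ≤ k ^ 2 := by
      have : exp (-k ^ 2 / 2) < exp (-(1 / 5)) := by
        linarith [add_one_le_exp (-(1 / 5) : ℝ)]
      linarith [exp_lt_exp.mp this]
    have hk2' : k ^ 2 ≤ 1 / 2 := by nlinarith
    have hδ' : 1.25 * (1 - k ^ 2 / 2) ≤ δ := by linarith [add_one_le_exp (-k ^ 2 / 2)]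
    have hpi : 5 / 2 ≤ √(2 * π) := by
      rw [Real.le_sqrt (by norm_num) (by positivity)]
      linarith [pi_gt_d2]
    have hgap : (s - k) / √(2 * π) ≤ (s - k) / (5 / 2) :=
      div_le_div_of_nonneg_left (by linarith) (by norm_num) hpi
    have hk0 : 0 < k := by nlinarith
    have hpoly : 1 / 2 - k ^ 2 ≤ 5 / 8 * k - 15 / 16 * k ^ 3 := by nlinarith
    have hsk : s - k ≤ 5 / 8 - 15 / 16 * k ^ 2 := by nlinarith
    linarith

lemma gaussianReal_map_sub_div (μ : ℝ) {σ : ℝ} (hσ : σ ≠ 0) :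
    (gaussianReal μ ⟨σ ^ 2, sq_nonneg σ⟩).map (fun z => (z - μ) / σ) = gaussianReal 0 1 := by
  have hcomp : (fun z => (z - μ) / σ) = (· / σ) ∘ (· - μ) := rfl
  let v : ℝ≥0 := ⟨σ ^ 2, sq_nonneg σ⟩
  change (gaussianReal μ v).map _ = _
  rw [hcomp, ← Measure.map_map (by fun_prop) (by fun_prop), gaussianReal_map_sub_const,
    gaussianReal_map_div_const, sub_self, zero_div]
  congr 1
  have hv : v ≠ 0 := by
    rw [ne_eq, ← NNReal.coe_eq_zero]
    exact pow_ne_zero 2 hσ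
  exact div_self hv

lemma gaussianReal_abs_add_gt_le_ofReal {k r δ : ℝ} (hk : 0 ≤ k) (hkr : k * |r| ≤ 1 / 2)
    (hδ : δ < 1) (hkδ : 1.25 * exp (-k ^ 2 / 2) ≤ δ) :
    gaussianReal 0 1 {y | k < |y + r|} ≤ ENNReal.ofReal δ :=
  (gaussianReal_abs_add_gt_le 1 k r).trans
    (gaussianReal_Ioi_sub_add_Ioi_add_le_of_mul_le_half hk (abs_nonneg r) hkr hδ hkδ)

end ProbabilityTheory

/-- Gaussian mechanism calibration: for a query of sensitivity `Δ`, adding Gaussian noise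
with `σ ≥ Δ·√(2 log(1.25/δ))/ε` makes the privacy-loss event have probability at most `δ`:
for adjacent values `a, b` with `|a − b| ≤ Δ` and `Z ~ N(a, σ²)`,
`P[ |log(φ_{a,σ}(Z)/φ_{b,σ}(Z))| > ε ] ≤ δ`. -/
theorem gaussian_mechanism_tail_bound (Δ a b ε δ σ : ℝ)
    (hΔ : 0 < Δ) (hab : |a - b| ≤ Δ)
    (hε : ε ∈ Set.Ioo (0 : ℝ) 1) (hδ : δ ∈ Set.Ioo (0 : ℝ) 1)
    (hσ : Δ * Real.sqrt (2 * Real.log (1.25 / δ)) / ε ≤ σ)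
    (φ : ℝ → ℝ → ℝ → ℝ)
    (hφ : ∀ c s z, φ c s z =
      (1 / (s * Real.sqrt (2 * Real.pi))) * Real.exp (-(z - c) ^ 2 / (2 * s ^ 2))) :
    gaussianReal a ⟨σ ^ 2, sq_nonneg σ⟩
        {z | ε < |Real.log (φ a σ z / φ b σ z)|} ≤ ENNReal.ofReal δ := by
  obtain ⟨hε0, hε1⟩ := hε
  obtain ⟨hδ0, hδ1⟩ := hδ
  set c := √(2 * log (1.25 / δ))
  have hc : 0 < c := sqrt_pos.mpr (mul_pos two_pos (log_pos (by rw [lt_div_iff₀ hδ0]; linarith)))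
  have hσ0 : 0 < σ := lt_of_lt_of_le (by positivity) hσ
  set u := (a - b) / σ
  have hloss (z : ℝ) : log (φ a σ z / φ b σ z) = u * ((z - a) / σ + u / 2) := by
    rw [hφ, hφ, log_div_gaussian_density hσ0.ne']
  rcases eq_or_ne u 0 with hu | hu
  · simp [hloss, hu, not_lt.mpr hε0.le]
  set k := ε / |u|
  have hk : c ≤ k := by
    rw [le_div_iff₀ (abs_pos.mpr hu), abs_div, abs_of_pos hσ0, mul_div_assoc', div_le_iff₀ hσ0]
    rw [div_le_iff₀ hε0] at hσ
    nlinarith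
  have hevent : {z | ε < |log (φ a σ z / φ b σ z)|} ⊆
      (fun z => (z - a) / σ) ⁻¹' {y | k < |y + u / 2|} := by
    intro z hz
    rw [mem_ofPred_eq, hloss, abs_mul] at hz
    exact (div_lt_iff₀' (abs_pos.mpr hu)).mpr hz
  have hks : k * |u / 2| = ε / 2 := by
    simp only [k, abs_div, abs_two]
    field_simp
  calc gaussianReal a ⟨σ ^ 2, sq_nonneg σ⟩ {z | ε < |log (φ a σ z / φ b σ z)|}
      ≤ gaussianReal 0 1 {y | k < |y + u / 2|} := by
        rw [← gaussianReal_map_sub_div a hσ0.ne',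
          Measure.map_apply (by fun_prop) (measurableSet_lt measurable_const (by fun_prop))]
        exact measure_mono hevent
    _ ≤ ENNReal.ofReal δ :=
        gaussianReal_abs_add_gt_le_ofReal (hc.le.trans hk) (by linarith) hδ1
          (five_fourths_mul_exp_neg_sq_half_le hδ0 hk)
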